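/- arXiv:2408.07498 — 7 statements merged into one kernel-verified Lean document; each statement's English description precedes it below -/
import Mathlib

section
/- For the convex function H(u) := ∫₀¹ |u - Q_ν(t)| dt on ℝ, the one-sided derivatives satisfy D₋H(u) = 2R_ν⁻(u) - 1 and D₊H(u) = 2R_ν⁺(u) - 1, so that the subdifferential is ∂H(u) = [2R_ν⁻(u) - 1, 2R_ν⁺(u) - 1]. -/
/-!
The quantile function pushes Lebesgue measure on `(0, 1)` forward to `ν`, so
`H(u) = ∫ |u - x| dν(x)`. Each `w ↦ |w - x|` is 1-Lipschitz, with right derivative `1` at `u`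
if `x ≤ u` and `-1` otherwise (left derivative `1` iff `x < u`), so dominated convergence of
the difference quotients yields the one-sided derivatives of `H`. Finally `H` is convex, and
the subgradients of a convex function of one variable at `u` are exactly the numbers between
its left and right derivatives there.
-/

open MeasureTheory Set Filter ProbabilityTheory
open scoped Topology NNReal

noncomputable def Rplus (μ : Measure ℝ) (x : ℝ) : ℝ := (μ (Iic x)).toReal

noncomputable def Rminus (μ : Measure ℝ) (x : ℝ) : ℝ := (μ (Iio x)).toReal

noncomputable def Quant (μ : Measure ℝ) (s : ℝ) : ℝ := sInf {x : ℝ | s ≤ Rplus μ x}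

/-- `H(u) = ∫₀¹ |u - Q_ν(t)| dt`. -/
noncomputable def Hfun (ν : Measure ℝ) (u : ℝ) : ℝ :=
  ∫ t in Ioo (0 : ℝ) 1, |u - Quant ν t|

section Quantile

variable (ν : Measure ℝ) [IsProbabilityMeasure ν]

lemma Quant_le_iff_le_cdf {s : ℝ} (hs : s ∈ Ioo 0 1) (x : ℝ) :
    Quant ν s ≤ x ↔ s ≤ cdf ν x := by
  have hQ : Quant ν s = sInf {x | s ≤ cdf ν x} := by
    simp only [Quant, Rplus, cdf_eq_real, measureReal_def]
  have hne : {x | s ≤ cdf ν x}.Nonempty :=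
    ((tendsto_cdf_atTop ν).eventually (eventually_ge_nhds hs.2)).exists
  have hbdd : BddBelow {x | s ≤ cdf ν x} := by
    obtain ⟨y, hy⟩ := ((tendsto_cdf_atBot ν).eventually (eventually_lt_nhds hs.1)).exists
    exact ⟨y, fun z hz => not_lt.1 fun hzy => hy.not_ge (hz.trans (monotone_cdf ν hzy.le))⟩
  rw [hQ]
  refine ⟨fun hx => ?_, fun hx => csInf_le hbdd hx⟩
  have h_gt : ∀ y ∈ Ioi x, s ≤ cdf ν y := fun y hy => by
    obtain ⟨z, hz, hzy⟩ := (csInf_lt_iff hbdd hne).1 (hx.trans_lt hy)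
    exact hz.trans (monotone_cdf ν hzy.le)
  exact ge_of_tendsto (((cdf ν).right_continuous x).mono Ioi_subset_Ici_self)
    (eventually_nhdsWithin_of_forall h_gt)

lemma monotoneOn_Quant : MonotoneOn (Quant ν) (Ioo 0 1) := fun _ hs _ hs' hss' =>
  (Quant_le_iff_le_cdf ν hs _).2 (hss'.trans ((Quant_le_iff_le_cdf ν hs' _).1 le_rfl))

lemma aemeasurable_Quant : AEMeasurable (Quant ν) (volume.restrict (Ioo 0 1)) :=
  aemeasurable_restrict_of_monotoneOn measurableSet_Ioo (monotoneOn_Quant ν)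

lemma map_Quant_volume_Ioo : (volume.restrict (Ioo (0 : ℝ) 1)).map (Quant ν) = ν := by
  refine Measure.ext_of_Iic _ _ fun x => ?_
  have hpre : Quant ν ⁻¹' Iic x ∩ Ioo 0 1 = Iic (cdf ν x) ∩ Ioo 0 1 := by
    ext s
    simp only [mem_inter_iff, mem_preimage, mem_Iic, and_congr_left_iff]
    exact fun hs => Quant_le_iff_le_cdf ν hs x
  rw [Measure.map_apply_of_aemeasurable (aemeasurable_Quant ν) measurableSet_Iic,
    Measure.restrict_apply' measurableSet_Ioo, hpre, ← Measure.restrict_apply' measurableSet_Ioo,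
    Measure.restrict_congr_set Ioo_ae_eq_Ioc, Measure.restrict_apply' measurableSet_Ioc,
    Iic_inter_Ioc_of_le (cdf_le_one ν x), Real.volume_Ioc, sub_zero, ofReal_cdf]

lemma Hfun_eq_integral (u : ℝ) : Hfun ν u = ∫ x, |u - x| ∂ν := by
  conv_rhs => rw [← map_Quant_volume_Ioo ν]
  exact (integral_map (aemeasurable_Quant ν)
    (continuous_const.sub continuous_id).abs.aestronglyMeasurable).symm

end Quantile

section ParametricIntegral

variable {α : Type*} [MeasurableSpace α] {μ : Measure α}

theorem hasDerivWithinAt_integral_of_lipschitzWith [IsFiniteMeasure μ] {F : ℝ → α → ℝ}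
    {F' : α → ℝ} {K : ℝ≥0} {s : Set ℝ} {u : ℝ} (hF_int : ∀ w, Integrable (F w) μ)
    (hF_lip : ∀ x, LipschitzWith K (F · x)) (hF' : ∀ x, HasDerivWithinAt (F · x) (F' x) s u) :
    HasDerivWithinAt (fun w => ∫ x, F w x ∂μ) (∫ x, F' x ∂μ) s u := by
  have hslope : slope (fun w => ∫ x, F w x ∂μ) u = fun w => ∫ x, slope (F · x) u w ∂μ := by
    ext w
    simp only [slope_def_field]
    rw [integral_div, integral_sub (hF_int w) (hF_int u)]
  rw [hasDerivWithinAt_iff_tendsto_slope, hslope]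
  refine tendsto_integral_filter_of_dominated_convergence (fun _ => (K : ℝ)) ?_ ?_
    (integrable_const _) (ae_of_all _ fun x => hasDerivWithinAt_iff_tendsto_slope.1 (hF' x))
  · refine Eventually.of_forall fun w => ?_
    simp only [slope_def_field]
    exact (((hF_int w).sub (hF_int u)).div_const _).aestronglyMeasurable
  · refine Eventually.of_forall fun w => ae_of_all _ fun x => ?_
    rw [slope_def_field, norm_div]
    refine div_le_of_le_mul₀ (norm_nonneg _) K.2 ?_
    exact (hF_lip x).dist_le_mul w u

theorem convexOn_integral {E : Type*} [AddCommMonoid E] [Module ℝ E] {s : Set E}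
    {F : E → α → ℝ} (hs : Convex ℝ s) (hF_int : ∀ w ∈ s, Integrable (F w) μ)
    (hF : ∀ x, ConvexOn ℝ s (F · x)) : ConvexOn ℝ s (fun w => ∫ x, F w x ∂μ) := by
  refine ⟨hs, fun u hu w hw a b ha hb hab => ?_⟩
  simp only [smul_eq_mul]
  rw [← integral_const_mul, ← integral_const_mul,
    ← integral_add ((hF_int u hu).const_mul a) ((hF_int w hw).const_mul b)]
  exact integral_mono (hF_int _ (hs hu hw ha hb hab))
    (((hF_int u hu).const_mul a).add ((hF_int w hw).const_mul b))
    fun x => by simpa only [smul_eq_mul] using (hF x).2 hu hw ha hb hab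

lemma integral_two_mul_indicator_one_sub_one [IsProbabilityMeasure μ] {s : Set α}
    (hs : MeasurableSet s) : ∫ x, (2 * s.indicator 1 x - 1) ∂μ = 2 * μ.real s - 1 := by
  rw [integral_sub (((integrable_const 1).indicator hs).const_mul 2) (integrable_const 1),
    integral_const_mul, integral_indicator_one hs]
  simp

end ParametricIntegral

theorem ConvexOn.forall_add_mul_sub_le_iff_mem_Icc {f : ℝ → ℝ} {a b u v : ℝ}
    (hf : ConvexOn ℝ univ f) (ha : HasDerivWithinAt f a (Iic u) u)
    (hb : HasDerivWithinAt f b (Ici u) u) :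
    (∀ w, f u + v * (w - u) ≤ f w) ↔ v ∈ Icc a b := by
  have hslope : ∀ w, f w - f u = slope f u w * (w - u) := fun w => by
    rcases eq_or_ne w u with rfl | hwu
    · simp
    · rw [slope_def_field, div_mul_cancel₀ _ (sub_ne_zero.2 hwu)]
  have hv : ∀ w, f u + v * (w - u) ≤ f w ↔ 0 ≤ (slope f u w - v) * (w - u) := fun w => by
    rw [sub_mul, ← hslope]; constructor <;> intro h <;> linarith
  simp only [hv]
  constructor
  · intro h
    have ha' := hasDerivWithinAt_iff_tendsto_slope.1 ha
    have hb' := hasDerivWithinAt_iff_tendsto_slope.1 hb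
    rw [Iic_sdiff_right] at ha'
    rw [Ici_sdiff_left] at hb'
    refine ⟨le_of_tendsto ha' ?_, ge_of_tendsto hb' ?_⟩
    · exact eventually_nhdsWithin_of_forall fun w (hwu : w < u) =>
        by nlinarith [h w, sub_neg.2 hwu]
    · exact eventually_nhdsWithin_of_forall fun w (huw : u < w) =>
        by nlinarith [h w, sub_pos.2 huw]
  · rintro ⟨hav, hvb⟩ w
    rcases lt_trichotomy w u with hwu | rfl | huw
    · have := hf.slope_le_of_hasDerivWithinAt_Iio trivial trivial hwu (ha.mono Iio_subset_Iic_self)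
      rw [slope_comm] at this
      nlinarith
    · simp
    · have := hf.le_slope_of_hasDerivWithinAt_Ioi trivial trivial huw (hb.mono Ioi_subset_Ici_self)
      nlinarith

lemma hasDerivWithinAt_abs_sub_Ici (x u : ℝ) :
    HasDerivWithinAt (fun w => |w - x|) (2 * (Iic u).indicator 1 x - 1) (Ici u) u := by
  rcases le_or_gt x u with hxu | hux
  · have hid : HasDerivWithinAt (fun w => w - x) 1 (Ici u) u :=
      ((hasDerivAt_id u).sub_const x).hasDerivWithinAt
    refine (hid.congr_of_mem (fun w hw => ?_) self_mem_Ici).congr_deriv (by norm_num [hxu])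
    exact abs_of_nonneg (sub_nonneg.2 (hxu.trans hw))
  · exact ((hasDerivAt_abs_neg (sub_neg.2 hux)).comp_sub_const u x).hasDerivWithinAt.congr_deriv
      (by norm_num [hux])

lemma hasDerivWithinAt_abs_sub_Iic (x u : ℝ) :
    HasDerivWithinAt (fun w => |w - x|) (2 * (Iio u).indicator 1 x - 1) (Iic u) u := by
  rcases lt_or_ge x u with hxu | hux
  · exact ((hasDerivAt_abs_pos (sub_pos.2 hxu)).comp_sub_const u x).hasDerivWithinAt.congr_deriv
      (by norm_num [hxu])
  · have hneg : HasDerivWithinAt (fun w => x - w) (-1) (Iic u) u :=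
      ((hasDerivAt_id u).const_sub x).hasDerivWithinAt
    refine (hneg.congr_of_mem (fun w hw => ?_) self_mem_Iic).congr_deriv (by norm_num [hux])
    rw [abs_sub_comm, abs_of_nonneg (sub_nonneg.2 ((mem_Iic.1 hw).trans hux))]

section IntegralAbsSub

variable {μ : Measure ℝ}

lemma integrable_abs_sub_of_integrable_sq [IsFiniteMeasure μ]
    (hμ : Integrable (fun x : ℝ => x ^ 2) μ) (w : ℝ) : Integrable (fun x => |w - x|) μ := by
  have hid : Integrable id μ :=
    ((memLp_two_iff_integrable_sq aestronglyMeasurable_id).2 hμ).integrable one_le_two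
  exact ((integrable_const w).sub hid).abs

lemma convexOn_integral_abs_sub (hint : ∀ w, Integrable (fun x => |w - x|) μ) :
    ConvexOn ℝ univ (fun w => ∫ x, |w - x| ∂μ) :=
  convexOn_integral convex_univ (fun w _ => hint w) fun x => convexOn_univ_dist x

lemma hasDerivWithinAt_integral_abs_sub_Ici [IsProbabilityMeasure μ]
    (hint : ∀ w, Integrable (fun x => |w - x|) μ) (u : ℝ) :
    HasDerivWithinAt (fun w => ∫ x, |w - x| ∂μ) (2 * μ.real (Iic u) - 1) (Ici u) u := by
  rw [← integral_two_mul_indicator_one_sub_one measurableSet_Iic]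
  exact hasDerivWithinAt_integral_of_lipschitzWith hint (LipschitzWith.dist_left ·)
    (fun x => hasDerivWithinAt_abs_sub_Ici x u)

lemma hasDerivWithinAt_integral_abs_sub_Iic [IsProbabilityMeasure μ]
    (hint : ∀ w, Integrable (fun x => |w - x|) μ) (u : ℝ) :
    HasDerivWithinAt (fun w => ∫ x, |w - x| ∂μ) (2 * μ.real (Iio u) - 1) (Iic u) u := by
  rw [← integral_two_mul_indicator_one_sub_one measurableSet_Iio]
  exact hasDerivWithinAt_integral_of_lipschitzWith hint (LipschitzWith.dist_left ·)
    (fun x => hasDerivWithinAt_abs_sub_Iic x u)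

end IntegralAbsSub

/-- One-sided derivatives of `H`: `D₋H(u) = 2R_ν⁻(u) - 1`, `D₊H(u) = 2R_ν⁺(u) - 1`,
and `∂H(u) = [2R_ν⁻(u) - 1, 2R_ν⁺(u) - 1]`. -/
theorem Hfun_one_sided_derivs (ν : Measure ℝ) [IsProbabilityMeasure ν]
    (hν : Integrable (fun x : ℝ => x ^ 2) ν) (u : ℝ) :
    HasDerivWithinAt (Hfun ν) (2 * Rminus ν u - 1) (Iic u) u ∧
    HasDerivWithinAt (Hfun ν) (2 * Rplus ν u - 1) (Ici u) u ∧
    ∀ v : ℝ, (∀ w : ℝ, Hfun ν u + v * (w - u) ≤ Hfun ν w) ↔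
      v ∈ Icc (2 * Rminus ν u - 1) (2 * Rplus ν u - 1) := by
  have hint := integrable_abs_sub_of_integrable_sq hν
  have hH : Hfun ν = fun w => ∫ x, |w - x| ∂ν := funext (Hfun_eq_integral ν)
  have hL : HasDerivWithinAt (Hfun ν) (2 * Rminus ν u - 1) (Iic u) u :=
    hH ▸ hasDerivWithinAt_integral_abs_sub_Iic hint u
  have hR : HasDerivWithinAt (Hfun ν) (2 * Rplus ν u - 1) (Ici u) u :=
    hH ▸ hasDerivWithinAt_integral_abs_sub_Ici hint u
  have hconv : ConvexOn ℝ univ (Hfun ν) := hH ▸ convexOn_integral_abs_sub hint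
  exact ⟨hL, hR, fun v => hconv.forall_add_mul_sub_le_iff_mem_Icc hL hR⟩
end

section
/- Let ν ∈ P₂(ℝ), ε > 0, and let h : (0,1) → ℝ be increasing. If u : (0,1) → ℝ satisfies u(s) + ε[R_ν⁻(u(s)), R_ν⁺(u(s))] ∋ h(s) + εs for almost every s ∈ (0,1) (in the sense that h(s) + εs - u(s) ∈ ε[R_ν⁻(u(s)), R_ν⁺(u(s))]), then u is increasing outside a null set. -/
open MeasureTheory Set

/-- If `h(s) + εs ∈ u(s) + ε[R_ν⁻(u(s)), R_ν⁺(u(s))]` a.e. with `h` increasing,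
then `u` is increasing outside a null set. -/
theorem resolvent_monotone (ν : Measure ℝ) [IsProbabilityMeasure ν]
    (ε : ℝ) (hε : 0 < ε) (h u : ℝ → ℝ)
    (hmono : MonotoneOn h (Ioo (0 : ℝ) 1))
    (hae : ∀ᵐ s ∂(volume.restrict (Ioo (0 : ℝ) 1)),
      h s + ε * s - u s ∈ Icc (ε * Rminus ν (u s)) (ε * Rplus ν (u s))) :
    ∃ N : Set ℝ, volume N = 0 ∧ MonotoneOn u (Ioo (0 : ℝ) 1 \ N) := by
  set P : ℝ → Prop := fun s =>
    h s + ε * s - u s ∈ Icc (ε * Rminus ν (u s)) (ε * Rplus ν (u s)) with hP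
  have hae' : volume ({s | ¬ P s} ∩ Ioo (0:ℝ) 1) = 0 := by
    have := (ae_restrict_iff' (measurableSet_Ioo)).mp hae
    rw [ae_iff] at this
    have h2 : {s | ¬ (s ∈ Ioo (0:ℝ) 1 → P s)} = {s | ¬ P s} ∩ Ioo (0:ℝ) 1 := by
      ext s; simp [and_comm]; tauto
    rw [h2] at this
    exact this
  refine ⟨{s | ¬ P s} ∩ Ioo (0:ℝ) 1, hae', ?_⟩
  intro s hs t ht hst
  have hsP : P s := by
    rcases hs with ⟨hs1, hs2⟩
    by_contra hc
    exact hs2 ⟨hc, hs1⟩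
  have htP : P t := by
    rcases ht with ⟨ht1, ht2⟩
    by_contra hc
    exact ht2 ⟨hc, ht1⟩
  by_contra hlt
  push_neg at hlt
  -- hlt : u t < u s
  have key : Rplus ν (u t) ≤ Rminus ν (u s) := by
    have hsub : Iic (u t) ⊆ Iio (u s) := fun x hx => lt_of_le_of_lt hx hlt
    exact ENNReal.toReal_mono (measure_ne_top ν _) (measure_mono hsub)
  have h1 : ε * Rminus ν (u s) ≤ h s + ε * s - u s := hsP.1
  have h2 : h t + ε * t - u t ≤ ε * Rplus ν (u t) := htP.2
  have hh : h s ≤ h t := hmono hs.1 ht.1 hst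
  nlinarith [mul_le_mul_of_nonneg_left key hε.le]
end

section
/- Let ν ∈ P₂(ℝ), ε > 0, and suppose u, h : (0,1) → ℝ are increasing and left-continuous with h(s) + εs ∈ u(s) + ε[R_ν⁻(u(s)), R_ν⁺(u(s))] for almost all s ∈ (0,1). Then this inclusion holds for all s ∈ (0,1). -/
open MeasureTheory Set

/-!
Both sides of the inclusion are increasing in `s`, and along `s' ↑ s` the lower endpoint
`u + ε R_ν⁻(u)` and the middle term `h + ε s` are left-continuous. Points where the inclusion holds
are dense (they have full measure), so approaching `s` from the left through such points gives
`lower(s) = lim lower(s') ≤ h(s) + ε s` and `h(s) + ε s = lim (h(s') + ε s') ≤ upper(s)`.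
-/

open Filter Topology ProbabilityTheory

lemma Rplus_mono (μ : Measure ℝ) [IsFiniteMeasure μ] : Monotone (Rplus μ) :=
  fun _ _ hxy => measureReal_mono (Iic_subset_Iic.2 hxy)

lemma Rminus_eq_leftLim_cdf (μ : Measure ℝ) [IsProbabilityMeasure μ] :
    Rminus μ = Function.leftLim (cdf μ) := by
  funext x
  have hIio := (cdf μ).measure_Iio (tendsto_cdf_atBot μ) x
  rw [measure_cdf, sub_zero] at hIio
  have hnonneg : 0 ≤ Function.leftLim (cdf μ) x :=
    (cdf_nonneg μ (x - 1)).trans ((cdf μ).mono.le_leftLim (sub_one_lt x))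
  rw [Rminus, hIio, ENNReal.toReal_ofReal hnonneg]

lemma continuousWithinAt_Rminus_Iic (μ : Measure ℝ) [IsProbabilityMeasure μ] (x : ℝ) :
    ContinuousWithinAt (Rminus μ) (Iic x) x := by
  rw [Rminus_eq_leftLim_cdf]
  exact continuousWithinAt_leftLim_Iic ((cdf μ).mono.tendsto_leftLim x)

lemma MonotoneOn.tendsto_nhdsLE_of_tendsto_nhdsLT {α β : Type*} [LinearOrder α]
    [TopologicalSpace α] [OrderTopology α] [Preorder β] [TopologicalSpace β]
    {f : α → β} {a b s : α} (hf : MonotoneOn f (Ioo a b)) (hs : s ∈ Ioo a b)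
    (hfs : Tendsto f (𝓝[<] s) (𝓝 (f s))) : Tendsto f (𝓝[<] s) (𝓝[≤] f s) :=
  tendsto_nhdsWithin_iff.2 ⟨hfs, eventually_of_mem (Ioo_mem_nhdsLT hs.1)
    fun _ ht => hf ⟨ht.1, ht.2.trans hs.2⟩ hs ht.2.le⟩

lemma frequently_nhdsLT_of_ae_restrict_Ioo {p : ℝ → Prop} {a b s : ℝ}
    (hp : ∀ᵐ t ∂volume.restrict (Ioo a b), p t) (hs : s ∈ Ioc a b) :
    ∃ᶠ t in 𝓝[<] s, p t := by
  rw [frequently_iff]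
  intro U hU
  obtain ⟨c, hcs, hcU⟩ := (mem_nhdsLT_iff_exists_mem_Ico_Ioo_subset hs.1).1 hU
  have : (ae (volume.restrict (Ioo c s))).NeBot := ae_restrict_neBot.2 (by simp [hcs.2])
  obtain ⟨t, ht, hpt⟩ := ((ae_restrict_mem measurableSet_Ioo).and
    (ae_restrict_of_ae_restrict_of_subset (Ioo_subset_Ioo hcs.1 hs.2) hp)).exists
  exact ⟨t, hcU ht, hpt⟩

/-- For increasing left-continuous `u, h`: the resolvent inclusion holding a.e.
implies it holds everywhere on `(0,1)`. -/
theorem resolvent_inclusion_everywhere (ν : Measure ℝ) [IsProbabilityMeasure ν]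
    (ε : ℝ) (hε : 0 < ε) (h u : ℝ → ℝ)
    (hhm : MonotoneOn h (Ioo (0 : ℝ) 1))
    (hum : MonotoneOn u (Ioo (0 : ℝ) 1))
    (hhl : ∀ s ∈ Ioo (0 : ℝ) 1,
      Filter.Tendsto h (nhdsWithin s (Iio s)) (nhds (h s)))
    (hul : ∀ s ∈ Ioo (0 : ℝ) 1,
      Filter.Tendsto u (nhdsWithin s (Iio s)) (nhds (u s)))
    (hae : ∀ᵐ s ∂(volume.restrict (Ioo (0 : ℝ) 1)),
      h s + ε * s ∈ Icc (u s + ε * Rminus ν (u s)) (u s + ε * Rplus ν (u s))) :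
    ∀ s ∈ Ioo (0 : ℝ) 1,
      h s + ε * s ∈ Icc (u s + ε * Rminus ν (u s)) (u s + ε * Rplus ν (u s)) := by
  intro s hs
  have hmid : Tendsto (fun t => h t + ε * t) (𝓝[<] s) (𝓝 (h s + ε * s)) :=
    (hhl s hs).add ((continuous_const_mul ε).continuousWithinAt.tendsto)
  have hlower : Tendsto (fun t => u t + ε * Rminus ν (u t)) (𝓝[<] s)
      (𝓝 (u s + ε * Rminus ν (u s))) :=
    (hul s hs).add (((continuousWithinAt_Rminus_Iic ν (u s)).tendsto.comp
      (hum.tendsto_nhdsLE_of_tendsto_nhdsLT hs (hul s hs))).const_mul ε)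
  have hgood := (frequently_nhdsLT_of_ae_restrict_Ioo hae ⟨hs.1, hs.2.le⟩).and_eventually
    (Ioo_mem_nhdsLT hs.1)
  refine ⟨le_of_tendsto_of_tendsto_of_frequently hlower tendsto_const_nhds ?_,
    le_of_tendsto_of_tendsto_of_frequently hmid tendsto_const_nhds ?_⟩
  · refine hgood.mono fun t ⟨hincl, ht⟩ => hincl.1.trans ?_
    gcongr
    · exact hhm ⟨ht.1, ht.2.trans hs.2⟩ hs ht.2.le
    · exact ht.2.le
  · refine hgood.mono fun t ⟨hincl, ht⟩ => hincl.2.trans ?_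
    have hut : u t ≤ u s := hum ⟨ht.1, ht.2.trans hs.2⟩ hs ht.2.le
    gcongr
    exact Rplus_mono ν hut
end

section
/- Let Q_μ be the quantile function of μ ∈ P₂(ℝ) and L > 0. Then Q_μ is L-Lipschitz on (0,1) if and only if R_μ⁺ satisfies the lower Lipschitz condition R_μ⁺(x) - R_μ⁺(y) ≥ (x-y)/L for all x ≥ y in the closure of (R_μ⁺)⁻¹((0,1)). -/
open MeasureTheory Set

/-! `Q_μ` and `R_μ⁺` form a Galois connection on levels `s ∈ (0,1)`: `Q_μ s ≤ x ↔ s ≤ R_μ⁺ x`.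
If `Q_μ` is continuous, this forces `Q_μ (R_μ⁺ x) = x` whenever `R_μ⁺ x ∈ (0,1)`, so the Lipschitz
bound for `Q_μ` at the levels `R_μ⁺ x`, `R_μ⁺ y` is the lower Lipschitz bound for `R_μ⁺` at `x`, `y`.
Conversely, every `c ∈ [Q_μ s₂, Q_μ s₁)` satisfies `s₂ ≤ R_μ⁺ (Q_μ s₂) ≤ R_μ⁺ c < s₁`, and the lower
bound between `Q_μ s₂` and `c` gives the Lipschitz bound for `Q_μ`. The set `(R_μ⁺)⁻¹((0,1))` is an
interval, so the bound passes to its closure by right continuity of `R_μ⁺`. -/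

open Filter Topology ProbabilityTheory

def LowerLipschitzOnWith (L : ℝ) (f : ℝ → ℝ) (s : Set ℝ) : Prop :=
  ∀ x ∈ s, ∀ y ∈ s, y ≤ x → (x - y) / L ≤ f x - f y

theorem LowerLipschitzOnWith.mono {L : ℝ} {f : ℝ → ℝ} {s t : Set ℝ}
    (h : LowerLipschitzOnWith L f t) (hst : s ⊆ t) : LowerLipschitzOnWith L f s :=
  fun x hx y hy => h x (hst hx) y (hst hy)

theorem Set.OrdConnected.Ioo_subset_of_mem_closure {α : Type*} [TopologicalSpace α]
    [LinearOrder α] [OrderClosedTopology α] {s : Set α} (hs : s.OrdConnected) {x y : α}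
    (hx : x ∈ closure s) (hy : y ∈ closure s) : Ioo x y ⊆ s := by
  intro t ht
  obtain ⟨a, hat, has⟩ := mem_closure_iff_nhds.1 hx _ (isOpen_Iio.mem_nhds ht.1)
  obtain ⟨b, hbt, hbs⟩ := mem_closure_iff_nhds.1 hy _ (isOpen_Ioi.mem_nhds ht.2)
  exact hs.out has hbs ⟨le_of_lt hat, le_of_lt hbt⟩

namespace StieltjesFunction

variable (f : StieltjesFunction ℝ)

theorem sInf_le_iff {s x : ℝ} (hbdd : BddBelow {y | s ≤ f y}) (hne : {y | s ≤ f y}.Nonempty) :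
    sInf {y | s ≤ f y} ≤ x ↔ s ≤ f x := by
  refine ⟨fun hx => ?_, fun hx => csInf_le hbdd hx⟩
  refine ge_of_tendsto ((f.right_continuous x).mono Ioi_subset_Ici_self) ?_
  filter_upwards [self_mem_nhdsWithin] with z (hz : x < z)
  obtain ⟨w, hw, hwz⟩ := exists_lt_of_csInf_lt hne (hx.trans_lt hz)
  exact le_trans hw (f.mono hwz.le)

theorem lowerLipschitzOnWith_closure {L : ℝ} {s : Set ℝ} (hs : s.OrdConnected)
    (h : LowerLipschitzOnWith L f s) : LowerLipschitzOnWith L f (closure s) := by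
  intro x hx y hy hyx
  rcases hyx.eq_or_lt with rfl | hlt
  · simp
  have hsub := hs.Ioo_subset_of_mem_closure hy hx
  -- compare the points `z` and `x + y - z` of `s`, letting `z` decrease to `y`
  refine le_of_tendsto_of_tendsto
    (tendsto_nhdsWithin_of_tendsto_nhds <|
      (by fun_prop : Continuous fun z => (x + y - 2 * z) / L).tendsto' y _ (by ring))
    (tendsto_const_nhds.sub ((f.right_continuous y).mono Ioi_subset_Ici_self)) ?_
  filter_upwards [Ioo_mem_nhdsGT (show y < (x + y) / 2 by linarith)] with z hz
  calc (x + y - 2 * z) / L = (x + y - z - z) / L := by ring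
    _ ≤ f (x + y - z) - f z :=
      h _ (hsub ⟨by linarith [hz.2], by linarith [hz.1]⟩) _
        (hsub ⟨hz.1, by linarith [hz.2]⟩) (by linarith [hz.2])
    _ ≤ f x - f z := sub_le_sub_right (f.mono (by linarith [hz.1])) _

end StieltjesFunction

section Quantile

variable {μ : Measure ℝ} [IsProbabilityMeasure μ]

theorem rplus_eq_cdf : Rplus μ = cdf μ :=
  funext fun x => by rw [cdf_eq_real]; rfl

theorem quant_le_iff {s x : ℝ} (hs : s ∈ Ioo 0 1) : Quant μ s ≤ x ↔ s ≤ cdf μ x := by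
  rw [Quant, rplus_eq_cdf]
  refine (cdf μ).sInf_le_iff ?_ ?_
  · obtain ⟨b, hb⟩ := eventually_atBot.1 ((tendsto_cdf_atBot μ).eventually_lt_const hs.1)
    exact ⟨b, fun y hy => le_of_not_gt fun hyb => (hb y hyb.le).not_ge hy⟩
  · exact ((tendsto_cdf_atTop μ).eventually_const_lt hs.2).exists.imp fun _ => le_of_lt

theorem quant_cdf_eq {x : ℝ} (hx : cdf μ x ∈ Ioo 0 1)
    (hQ : ContinuousWithinAt (Quant μ) (Ioi (cdf μ x)) (cdf μ x)) : Quant μ (cdf μ x) = x := by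
  refine le_antisymm ((quant_le_iff hx).2 le_rfl) (ge_of_tendsto hQ ?_)
  filter_upwards [Ioo_mem_nhdsGT hx.2] with s hs
  exact le_of_lt <| not_le.1 fun h => hs.1.not_ge ((quant_le_iff ⟨hx.1.trans hs.1, hs.2⟩).1 h)

theorem quant_sub_le_of_lowerLipschitzOnWith {L : ℝ} (hL : 0 < L)
    (h : LowerLipschitzOnWith L (cdf μ) (cdf μ ⁻¹' Ioo 0 1)) {s₁ s₂ : ℝ}
    (hs₁ : s₁ ∈ Ioo 0 1) (hs₂ : s₂ ∈ Ioo 0 1) : Quant μ s₁ - Quant μ s₂ ≤ L * |s₁ - s₂| := by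
  refine le_of_forall_lt_imp_le_of_dense fun t ht => ?_
  rcases le_or_gt t 0 with ht0 | ht0
  · exact ht0.trans (by positivity)
  set a := Quant μ s₂
  have hFa : s₂ ≤ cdf μ a := (quant_le_iff hs₂).1 le_rfl
  have hFc : cdf μ (a + t) < s₁ :=
    not_le.1 fun hc => ((quant_le_iff hs₁).2 hc).not_gt (by linarith)
  have hFac : cdf μ a ≤ cdf μ (a + t) := (cdf μ).mono (by linarith)
  have hlow := h (a + t) ⟨by linarith [hs₂.1], by linarith [hs₁.2]⟩ a
    ⟨by linarith [hs₂.1], by linarith [hs₁.2]⟩ (by linarith)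
  rw [div_le_iff₀ hL, add_sub_cancel_left] at hlow
  calc t ≤ L * (cdf μ (a + t) - cdf μ a) := by linarith
    _ ≤ L * |s₁ - s₂| :=
      mul_le_mul_of_nonneg_left (by linarith [le_abs_self (s₁ - s₂)]) hL.le

end Quantile

theorem quantile_lipschitz_iff_cdf_lower_lipschitz_general (μ : Measure ℝ)
    [IsProbabilityMeasure μ]
    (L : ℝ) (hL : 0 < L) :
    (∀ s₁ ∈ Ioo (0 : ℝ) 1, ∀ s₂ ∈ Ioo (0 : ℝ) 1,
        |Quant μ s₁ - Quant μ s₂| ≤ L * |s₁ - s₂|) ↔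
      (∀ x ∈ closure ((Rplus μ) ⁻¹' (Ioo (0 : ℝ) 1)),
        ∀ y ∈ closure ((Rplus μ) ⁻¹' (Ioo (0 : ℝ) 1)),
          y ≤ x → (x - y) / L ≤ Rplus μ x - Rplus μ y) := by
  rw [rplus_eq_cdf]
  set S := cdf μ ⁻¹' Ioo (0 : ℝ) 1
  change _ ↔ LowerLipschitzOnWith L (cdf μ) (closure S)
  constructor
  · intro hLip
    have hQ : ContinuousOn (Quant μ) (Ioo 0 1) := (LipschitzOnWith.of_dist_le' hLip).continuousOn
    have hQF : ∀ x ∈ S, Quant μ (cdf μ x) = x := fun x hx =>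
      quant_cdf_eq hx (hQ.continuousAt (Ioo_mem_nhds hx.1 hx.2)).continuousWithinAt
    refine (cdf μ).lowerLipschitzOnWith_closure (ordConnected_Ioo.preimage_mono (cdf μ).mono)
      fun x hx y hy hyx => ?_
    rw [div_le_iff₀ hL, mul_comm]
    calc x - y = |Quant μ (cdf μ x) - Quant μ (cdf μ y)| := by
          rw [hQF x hx, hQF y hy, abs_of_nonneg (sub_nonneg.2 hyx)]
      _ ≤ L * |cdf μ x - cdf μ y| := hLip _ hx _ hy
      _ = L * (cdf μ x - cdf μ y) := by
          rw [abs_of_nonneg (sub_nonneg.2 ((cdf μ).mono hyx))]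
  · intro hlow s₁ hs₁ s₂ hs₂
    have hS := hlow.mono (subset_closure : S ⊆ closure S)
    rw [abs_sub_le_iff]
    exact ⟨quant_sub_le_of_lowerLipschitzOnWith hL hS hs₁ hs₂,
      abs_sub_comm s₁ s₂ ▸ quant_sub_le_of_lowerLipschitzOnWith hL hS hs₂ hs₁⟩

/-- `Q_μ` is `L`-Lipschitz on `(0,1)` iff `R_μ⁺` satisfies the lower `1/L`-Lipschitz
condition on the closure of `(R_μ⁺)⁻¹((0,1))`. -/
theorem quantile_lipschitz_iff_cdf_lower_lipschitz (μ : Measure ℝ)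
    [IsProbabilityMeasure μ] (hμ : Integrable (fun x : ℝ => x ^ 2) μ)
    (L : ℝ) (hL : 0 < L) :
    (∀ s₁ ∈ Ioo (0 : ℝ) 1, ∀ s₂ ∈ Ioo (0 : ℝ) 1,
        |Quant μ s₁ - Quant μ s₂| ≤ L * |s₁ - s₂|) ↔
      (∀ x ∈ closure ((Rplus μ) ⁻¹' (Ioo (0 : ℝ) 1)),
        ∀ y ∈ closure ((Rplus μ) ⁻¹' (Ioo (0 : ℝ) 1)),
          y ≤ x → (x - y) / L ≤ Rplus μ x - Rplus μ y) :=
  quantile_lipschitz_iff_cdf_lower_lipschitz_general μ L hL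
end

section
/- The quantile function Q_μ of a probability measure μ on ℝ is continuous on (0,1) if and only if the support of μ is an interval (convex). -/
open MeasureTheory Set

/-- The support of a measure: points all of whose open neighborhoods have
positive measure. -/
def msupport (μ : Measure ℝ) : Set ℝ :=
  {x | ∀ U : Set ℝ, IsOpen U → x ∈ U → 0 < μ U}

/-!
Let `F` be the cdf of `μ`. For `s ∈ (0, 1)` the quantile is the lower adjoint of `F`:
`Q s ≤ x ↔ s ≤ F x`. Hence `Q` is always left-continuous on `(0, 1)`, and it jumps at `s`
exactly when the level set `{F = s}` has nonempty interior. On the other side, a point lies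
outside the support iff `F` is locally constant there, and a point outside the support lies
strictly between two points of the support iff its `F`-value is in `(0, 1)`. So both
conditions say that `F` has no flat piece at a level in `(0, 1)`.
-/

open ProbabilityTheory Filter Topology

theorem Set.ordConnected_iff_forall_notMem {α : Type*} [LinearOrder α] {S : Set α} :
    S.OrdConnected ↔ ∀ c ∉ S, ¬ ((Iio c ∩ S).Nonempty ∧ (Ioi c ∩ S).Nonempty) := by
  refine ⟨fun h c hc ⟨⟨a, hac, ha⟩, ⟨b, hcb, hb⟩⟩ =>
    hc (h.out ha hb ⟨hac.le, hcb.le⟩), fun h => ⟨fun a ha b hb c hc =>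
      by_contra fun hcS => h c hcS ⟨⟨a, ?_, ha⟩, ⟨b, ?_, hb⟩⟩⟩⟩
  · exact hc.1.lt_of_ne (by rintro rfl; exact hcS ha)
  · exact hc.2.lt_of_ne' (by rintro rfl; exact hcS hb)

namespace MeasureTheory.Measure

variable {X : Type*} [TopologicalSpace X] [MeasurableSpace X] {μ : Measure X}

theorem _root_.IsOpen.nonempty_inter_support_iff [HereditarilyLindelofSpace X] {U : Set X}
    (hU : IsOpen U) : (U ∩ μ.support).Nonempty ↔ 0 < μ U :=
  ⟨fun ⟨_, hxU, hx⟩ => (mem_support_iff_forall _).1 hx U (hU.mem_nhds hxU),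
    nonempty_inter_support_of_pos⟩

theorem measure_singleton_eq_zero_of_notMem_support {x : X} (hx : x ∉ μ.support) :
    μ {x} = 0 := by
  obtain ⟨U, hU, hU0⟩ := notMem_support_iff_exists.1 hx
  exact measure_mono_null (singleton_subset_iff.2 (mem_of_mem_nhds hU)) hU0

end MeasureTheory.Measure

theorem msupport_eq_support (μ : Measure ℝ) : msupport μ = μ.support := by
  ext x
  rw [Measure.support_eq_forall_isOpen]
  exact ⟨fun h U hxU hU => h U hU hxU, fun h U hU hxU => h U hxU hU⟩

namespace ProbabilityTheory

variable {μ : Measure ℝ} [IsProbabilityMeasure μ]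

theorem measure_Ioc_eq_ofReal_cdf (a b : ℝ) :
    μ (Ioc a b) = ENNReal.ofReal (cdf μ b - cdf μ a) := by
  conv_lhs => rw [← measure_cdf μ]
  exact (cdf μ).measure_Ioc a b

theorem measure_Ioi_eq_ofReal_cdf (x : ℝ) : μ (Ioi x) = ENNReal.ofReal (1 - cdf μ x) := by
  conv_lhs => rw [← measure_cdf μ]
  exact (cdf μ).measure_Ioi (tendsto_cdf_atTop μ) x

theorem measure_Ioc_eq_zero_iff_cdf_eq {a b : ℝ} (hab : a ≤ b) :
    μ (Ioc a b) = 0 ↔ cdf μ a = cdf μ b := by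
  rw [measure_Ioc_eq_ofReal_cdf, ENNReal.ofReal_eq_zero, sub_nonpos]
  exact ⟨(monotone_cdf μ hab).antisymm, Eq.ge⟩

theorem notMem_support_iff_mem_interior_cdf_fiber {c : ℝ} :
    c ∉ μ.support ↔ c ∈ interior (cdf μ ⁻¹' {cdf μ c}) := by
  rw [mem_interior_iff_mem_nhds, Measure.notMem_support_iff_exists]
  constructor
  · rintro ⟨U, hU, hU0⟩
    obtain ⟨a, b, hc, hab⟩ := mem_nhds_iff_exists_Ioo_subset.1 hU
    filter_upwards [Ioo_mem_nhds hc.1 hc.2] with x hx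
    have hnull {y z : ℝ} (hy : a < y) (hz : z < b) : μ (Ioc y z) = 0 :=
      measure_mono_null (fun w hw => hab ⟨hy.trans hw.1, hw.2.trans_lt hz⟩) hU0
    rcases le_total x c with hxc | hcx
    · exact (measure_Ioc_eq_zero_iff_cdf_eq hxc).1 (hnull hx.1 hc.2)
    · exact ((measure_Ioc_eq_zero_iff_cdf_eq hcx).1 (hnull hc.1 hx.2)).symm
  · intro h
    obtain ⟨a, b, hc, hab⟩ := mem_nhds_iff_exists_Ioo_subset.1 h
    obtain ⟨a', ha', hac⟩ := exists_between hc.1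
    obtain ⟨b', hcb, hb'⟩ := exists_between hc.2
    refine ⟨Ioc a' b', Ioc_mem_nhds hac hcb,
      (measure_Ioc_eq_zero_iff_cdf_eq (hac.trans hcb).le).2 ?_⟩
    rw [hab ⟨ha', hac.trans hc.2⟩, hab ⟨hc.1.trans hcb, hb'⟩]

theorem ordConnected_support_iff :
    μ.support.OrdConnected ↔ ∀ c ∉ μ.support, cdf μ c ∉ Ioo 0 1 := by
  rw [ordConnected_iff_forall_notMem]
  refine forall₂_congr fun c hc => ?_
  rw [isOpen_Iio.nonempty_inter_support_iff, isOpen_Ioi.nonempty_inter_support_iff,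
    measure_congr (Iio_ae_eq_Iic' (Measure.measure_singleton_eq_zero_of_notMem_support hc)),
    ← ofReal_cdf, measure_Ioi_eq_ofReal_cdf, ENNReal.ofReal_pos, ENNReal.ofReal_pos, sub_pos]
  rfl

theorem quant_eq_sInf_cdf (s : ℝ) : Quant μ s = sInf {x | s ≤ cdf μ x} := by
  simp only [Quant, Rplus, cdf_eq_real, measureReal_def]

theorem quant_le_iff {s x : ℝ} (hs : s ∈ Ioo 0 1) : Quant μ s ≤ x ↔ s ≤ cdf μ x := by
  have hbdd : BddBelow {x | s ≤ cdf μ x} := by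
    obtain ⟨M, hM⟩ :=
      ((tendsto_cdf_atBot μ).eventually (eventually_lt_nhds hs.1)).exists_forall_of_atBot
    exact ⟨M, fun y hy => le_of_not_gt fun hyM => (hM y hyM.le).not_ge hy⟩
  have hne : {x | s ≤ cdf μ x}.Nonempty :=
    ((tendsto_cdf_atTop μ).eventually (eventually_ge_nhds hs.2)).exists
  rw [quant_eq_sInf_cdf]
  refine ⟨fun h => ?_, fun h => csInf_le hbdd h⟩
  rw [← (cdf μ).iInf_Ioi_eq]
  refine le_ciInf fun y => ?_
  obtain ⟨z, hz, hzy⟩ := exists_lt_of_csInf_lt hne (h.trans_lt y.2)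
  exact hz.trans (monotone_cdf μ hzy.le)

theorem lt_quant_iff {s x : ℝ} (hs : s ∈ Ioo 0 1) : x < Quant μ s ↔ cdf μ x < s := by
  simpa only [not_le] using (quant_le_iff hs).not

theorem continuousWithinAt_quant_iff {s : ℝ} (hs : s ∈ Ioo 0 1) :
    ContinuousWithinAt (Quant μ) (Ioo 0 1) s ↔ interior (cdf μ ⁻¹' {s}) = ∅ := by
  constructor
  · refine fun hQ => eq_empty_of_forall_notMem fun c hc => ?_
    rw [mem_interior_iff_mem_nhds] at hc
    obtain ⟨b, hcb, hb⟩ := exists_Ico_subset_of_mem_nhds hc ⟨c + 1, by linarith⟩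
    have hQs : Quant μ s ≤ c := (quant_le_iff hs).2 (mem_of_mem_nhds hc).ge
    have hcdf : ∀ x < b, cdf μ x ≤ s := fun x hx => by
      rcases lt_or_ge x c with hxc | hcx
      · exact (monotone_cdf μ hxc.le).trans (mem_of_mem_nhds hc).le
      · exact (hb ⟨hcx, hx⟩).le
    have hbQ : MapsTo (Quant μ) (Ioo s 1) (Ici b) := fun t ht =>
      le_of_forall_lt fun x hx =>
        (lt_quant_iff ⟨hs.1.trans ht.1, ht.2⟩).2 ((hcdf x hx).trans_lt ht.1)
    have hs_cl : s ∈ closure (Ioo s 1) := by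
      rw [closure_Ioo hs.2.ne]
      exact ⟨le_rfl, hs.2.le⟩
    have hbQs := (hQ.mono (Ioo_subset_Ioo_left hs.1.le)).mem_closure hs_cl hbQ
    rw [closure_Ici] at hbQs
    exact (hQs.trans_lt hcb).not_ge hbQs
  · refine fun h => tendsto_order.2 ⟨fun a ha => ?_, fun b hb => ?_⟩
    · filter_upwards [self_mem_nhdsWithin,
        nhdsWithin_le_nhds (eventually_gt_nhds ((lt_quant_iff hs).1 ha))] with t ht hat
      exact (lt_quant_iff ht).2 hat
    · obtain ⟨x, hx, hxs⟩ : ∃ x ∈ Ioo (Quant μ s) b, cdf μ x ≠ s := by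
        by_contra! hflat
        obtain ⟨c, hc⟩ := exists_between hb
        exact notMem_empty c (h ▸ interior_maximal hflat isOpen_Ioo hc)
      have hsx : s < cdf μ x := ((quant_le_iff hs).1 hx.1.le).lt_of_ne' hxs
      filter_upwards [self_mem_nhdsWithin,
        nhdsWithin_le_nhds (eventually_lt_nhds hsx)] with t ht htx
      exact ((quant_le_iff ht).2 htx.le).trans_lt hx.2

end ProbabilityTheory

/-- `Q_μ` is continuous on `(0,1)` iff the support of `μ` is convex. -/
theorem quantile_continuous_iff_support_convex (μ : Measure ℝ)
    [IsProbabilityMeasure μ] :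
    ContinuousOn (Quant μ) (Ioo (0 : ℝ) 1) ↔ Convex ℝ (msupport μ) := by
  rw [convex_iff_ordConnected, msupport_eq_support, ordConnected_support_iff]
  calc ContinuousOn (Quant μ) (Ioo 0 1)
        ↔ ∀ s ∈ Ioo (0 : ℝ) 1, interior (cdf μ ⁻¹' {s}) = ∅ :=
        forall₂_congr fun s hs => continuousWithinAt_quant_iff hs
    _ ↔ ∀ c ∉ μ.support, cdf μ c ∉ Ioo 0 1 := by
      refine ⟨fun H c hc hcI => ?_, fun H s hs => eq_empty_of_forall_notMem fun c hc => ?_⟩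
      · exact (H _ hcI).subset (notMem_support_iff_mem_interior_cdf_fiber.1 hc)
      · have hcs : cdf μ c = s := interior_subset (s := cdf μ ⁻¹' {s}) hc
        subst hcs
        exact H c (notMem_support_iff_mem_interior_cdf_fiber.2 hc) hs
end

section
/- Let ν ∈ P₂(ℝ) with continuous CDF R_ν = R_ν⁻ = R_ν⁺ such that R_ν is (1/L_ν)-Lipschitz, let ε > 0, and suppose the increasing functions h, u : (0,1) → ℝ satisfy h(s) + εs = u(s) + εR_ν(u(s)) for all s ∈ (0,1). If h satisfies the lower Lipschitz bound h(s₁) - h(s₂) ≥ L_h(s₁ - s₂) for s₁ ≥ s₂ with L_h ≥ 0, then u satisfies the lower Lipschitz bound with constant (L_h + ε)/(1 + ε/L_ν) > 0. -/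
open MeasureTheory Set

/-- One resolvent step improves the lower Lipschitz constant:
if `R_ν` is continuous and `1/L_ν`-Lipschitz and `h` is lower `L_h`-Lipschitz,
then `u` is lower `(L_h + ε)/(1 + ε/L_ν)`-Lipschitz. -/
theorem resolvent_improves_lower_lipschitz (ν : Measure ℝ) [IsProbabilityMeasure ν]
    (hν : Integrable (fun x : ℝ => x ^ 2) ν)
    (Lν : ℝ) (hLν : 0 < Lν)
    (heq : ∀ x : ℝ, Rminus ν x = Rplus ν x)
    (hcont : Continuous (Rplus ν))
    (hRLip : ∀ x y : ℝ, |Rplus ν x - Rplus ν y| ≤ (1 / Lν) * |x - y|)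
    (ε : ℝ) (hε : 0 < ε) (h u : ℝ → ℝ)
    (hhm : MonotoneOn h (Ioo (0 : ℝ) 1))
    (hum : MonotoneOn u (Ioo (0 : ℝ) 1))
    (hres : ∀ s ∈ Ioo (0 : ℝ) 1, h s + ε * s = u s + ε * Rplus ν (u s))
    (Lh : ℝ) (hLh : 0 ≤ Lh)
    (hlow : ∀ s₁ ∈ Ioo (0 : ℝ) 1, ∀ s₂ ∈ Ioo (0 : ℝ) 1, s₂ ≤ s₁ →
      Lh * (s₁ - s₂) ≤ h s₁ - h s₂) :
    0 < (Lh + ε) / (1 + ε / Lν) ∧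
      ∀ s₁ ∈ Ioo (0 : ℝ) 1, ∀ s₂ ∈ Ioo (0 : ℝ) 1, s₂ ≤ s₁ →
        (Lh + ε) / (1 + ε / Lν) * (s₁ - s₂) ≤ u s₁ - u s₂ := by
  have hpos : 0 < 1 + ε / Lν := by positivity
  refine ⟨by positivity, fun s₁ hs₁ s₂ hs₂ hle => ?_⟩
  have hd : 0 ≤ u s₁ - u s₂ := sub_nonneg.mpr (hum hs₂ hs₁ hle)
  have e₁ := hres s₁ hs₁
  have e₂ := hres s₂ hs₂
  have hh := hlow s₁ hs₁ s₂ hs₂ hle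
  have hR : Rplus ν (u s₁) - Rplus ν (u s₂) ≤ (1 / Lν) * (u s₁ - u s₂) := by
    calc Rplus ν (u s₁) - Rplus ν (u s₂) ≤ |Rplus ν (u s₁) - Rplus ν (u s₂)| := le_abs_self _
      _ ≤ (1 / Lν) * |u s₁ - u s₂| := hRLip _ _
      _ = (1 / Lν) * (u s₁ - u s₂) := by rw [abs_of_nonneg hd]
  have key : (Lh + ε) * (s₁ - s₂) ≤ (1 + ε / Lν) * (u s₁ - u s₂) := by
    have : ε / Lν = ε * (1 / Lν) := by ring
    nlinarith [mul_le_mul_of_nonneg_left hR hε.le]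
  rw [div_mul_eq_mul_div, div_le_iff₀ hpos]
  linarith [key]
end

section
/- Let ν ∈ P₂(ℝ) with R_ν⁻ = R_ν⁺ continuous and let ε > 0. If the increasing left-continuous functions h, u : (0,1) → ℝ satisfy h(s) + εs ∈ u(s) + ε[R_ν⁻(u(s)), R_ν⁺(u(s))] for all s ∈ (0,1), and h is continuous on (0,1), then u is continuous on (0,1). -/
open MeasureTheory Set

/-- The resolvent preserves continuity of quantile functions. -/
theorem resolvent_preserves_continuity (ν : Measure ℝ) [IsProbabilityMeasure ν]
    (hν : Integrable (fun x : ℝ => x ^ 2) ν)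
    (heq : ∀ x : ℝ, Rminus ν x = Rplus ν x)
    (hcont : Continuous (Rplus ν))
    (ε : ℝ) (hε : 0 < ε) (h u : ℝ → ℝ)
    (hhm : MonotoneOn h (Ioo (0 : ℝ) 1))
    (hum : MonotoneOn u (Ioo (0 : ℝ) 1))
    (hul : ∀ s ∈ Ioo (0 : ℝ) 1,
      Filter.Tendsto u (nhdsWithin s (Iio s)) (nhds (u s)))
    (hhc : ContinuousOn h (Ioo (0 : ℝ) 1))
    (hincl : ∀ s ∈ Ioo (0 : ℝ) 1,
      h s + ε * s ∈ Icc (u s + ε * Rminus ν (u s)) (u s + ε * Rplus ν (u s))) :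
    ContinuousOn u (Ioo (0 : ℝ) 1) := by
  set F : ℝ → ℝ := fun x => x + ε * Rplus ν x with hFdef
  have hRnn : ∀ x, 0 ≤ Rplus ν x := fun x => ENNReal.toReal_nonneg
  have hRle : ∀ x, Rplus ν x ≤ 1 := by
    intro x
    have h1 : ν (Iic x) ≤ 1 := prob_le_one
    calc (ν (Iic x)).toReal ≤ (1 : ENNReal).toReal :=
          ENNReal.toReal_mono ENNReal.one_ne_top h1
      _ = 1 := by simp
  have hmono : Monotone (Rplus ν) := fun x y hxy =>
    ENNReal.toReal_mono (measure_ne_top ν _) (measure_mono (Iic_subset_Iic.2 hxy))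
  have hFmono : StrictMono F := by
    intro x y hxy
    have := hmono hxy.le
    dsimp [F]
    nlinarith
  have hFcont : Continuous F := continuous_id.add (continuous_const.mul hcont)
  have htop : Filter.Tendsto F Filter.atTop Filter.atTop := by
    apply Filter.tendsto_atTop_mono (fun x => ?_) Filter.tendsto_id
    dsimp [F]
    nlinarith [hRnn x]
  have hbot : Filter.Tendsto F Filter.atBot Filter.atBot := by
    apply Filter.tendsto_atBot_mono (fun x => ?_)
      (Filter.tendsto_atBot_add_const_right _ ε Filter.tendsto_id)
    dsimp [F]
    nlinarith [hRle x]
  have hsurj : Function.Surjective F := by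
    intro y
    obtain ⟨a, ha⟩ := (htop.eventually (Filter.eventually_ge_atTop y)).exists
    obtain ⟨b, hb⟩ := (hbot.eventually (Filter.eventually_le_atBot y)).exists
    rcases le_total b a with hba | hab
    · obtain ⟨x, _, hx⟩ := intermediate_value_Icc hba hFcont.continuousOn ⟨hb, ha⟩
      exact ⟨x, hx⟩
    · exact ⟨a, le_antisymm ((hFmono.monotone hab).trans hb) ha⟩
  let e : ℝ ≃o ℝ := StrictMono.orderIsoOfSurjective F hFmono hsurj
  have key : ∀ s ∈ Ioo (0:ℝ) 1, F (u s) = h s + ε * s := by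
    intro s hs
    have h1 := hincl s hs
    rw [heq (u s)] at h1
    exact (le_antisymm h1.2 h1.1).symm
  have hc : ContinuousOn (fun s => e.symm (h s + ε * s)) (Ioo 0 1) :=
    e.symm.continuous.comp_continuousOn
      (hhc.add (continuous_const.mul continuous_id).continuousOn)
  apply hc.congr
  intro s hs
  have he : e (u s) = h s + ε * s := key s hs
  calc u s = e.symm (e (u s)) := (e.symm_apply_apply _).symm
    _ = e.symm (h s + ε * s) := by rw [he]
end
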